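/- Any pair of differentiable functions (a,b) on (1,∞) satisfying da/dr = -r/(2R₋²), db/dr = -r/(2R₊²), R₊²(1-b²) = R₋²(1-a²) and ab = 0 (with R₊² = (r²+1)/2, R₋² = (r²-1)/2) must have a ≡ 0 and b(r) = ±√2/√(r²+1). -/

import Mathlib

/-!
Since `R₊² > R₋² > 0`, the constraint `R₊²(1 - b²) = R₋²(1 - a²)` rules out `b = 0`, so `ab = 0`
forces `a = 0` and then `b² = 2/(r² + 1)`. Thus `b` is a continuous function on the connected set
`(1, ∞)` whose square is that of the nowhere vanishing `√2/√(r² + 1)`, so it equals it up to a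
global sign.
-/

/-- The invariant HYM system for SO(3)-connections on `P_Id`: the ODEs
`da/dr = -(r/(2R₋²))·a`, `db/dr = -(r/(2R₊²))·b` together with the algebraic constraints
`R₊²(1-b²) = R₋²(1-a²)` and `ab = 0`, where `R₊² = (r²+1)/2`, `R₋² = (r²-1)/2`. -/
def IsInvariantHYM (a b : ℝ → ℝ) : Prop :=
  ∀ r ∈ Set.Ioi (1 : ℝ),
    HasDerivAt a (-(r / (2 * ((r ^ 2 - 1) / 2))) * a r) r ∧
    HasDerivAt b (-(r / (2 * ((r ^ 2 + 1) / 2))) * b r) r ∧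
    ((r ^ 2 + 1) / 2) * (1 - (b r) ^ 2) = ((r ^ 2 - 1) / 2) * (1 - (a r) ^ 2) ∧
    a r * b r = 0

open Set

theorem eq_zero_and_sq_eq_of_hym_constraints {r x y : ℝ} (hr : 1 < r ^ 2)
    (hc : ((r ^ 2 + 1) / 2) * (1 - y ^ 2) = ((r ^ 2 - 1) / 2) * (1 - x ^ 2))
    (hxy : x * y = 0) :
    x = 0 ∧ y ^ 2 = (√2 / √(r ^ 2 + 1)) ^ 2 := by
  have hx : x = 0 := by
    by_contra hx
    have hy : y = 0 := (mul_eq_zero.1 hxy).resolve_left hx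
    subst hy
    nlinarith [mul_pos (sub_pos.2 hr) (sq_pos_of_ne_zero hx)]
  refine ⟨hx, ?_⟩
  subst hx
  rw [div_pow, Real.sq_sqrt zero_le_two, Real.sq_sqrt (by positivity)]
  field_simp
  linarith

theorem continuous_sqrt_two_div_sqrt_sq_add_one :
    Continuous (fun r : ℝ => √2 / √(r ^ 2 + 1)) :=
  continuous_const.div (by fun_prop) fun r => by positivity

namespace IsInvariantHYM

variable {a b : ℝ → ℝ}

theorem eq_zero_and_sq_eq (h : IsInvariantHYM a b) {r : ℝ} (hr : r ∈ Ioi 1) :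
    a r = 0 ∧ b r ^ 2 = (√2 / √(r ^ 2 + 1)) ^ 2 :=
  have hr2 : 1 < r ^ 2 := one_lt_pow₀ hr two_ne_zero
  eq_zero_and_sq_eq_of_hym_constraints hr2 (h r hr).2.2.1 (h r hr).2.2.2

theorem continuousOn_b (h : IsInvariantHYM a b) : ContinuousOn b (Ioi 1) :=
  fun r hr => (h r hr).2.1.continuousAt.continuousWithinAt

end IsInvariantHYM

/-- Any differentiable solution of the invariant HYM system on `(1,∞)` has `a ≡ 0` and
`b(r) = ±√2/√(r²+1)`. -/
theorem stenzel_so3_hym_classification (a b : ℝ → ℝ) (h : IsInvariantHYM a b) :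
    (∀ r ∈ Set.Ioi (1 : ℝ), a r = 0) ∧
    ((∀ r ∈ Set.Ioi (1 : ℝ), b r = Real.sqrt 2 / Real.sqrt (r ^ 2 + 1)) ∨
      (∀ r ∈ Set.Ioi (1 : ℝ), b r = -(Real.sqrt 2 / Real.sqrt (r ^ 2 + 1)))) :=
  ⟨fun _ hr => (h.eq_zero_and_sq_eq hr).1,
    isPreconnected_Ioi.eq_or_eq_neg_of_sq_eq h.continuousOn_b
      continuous_sqrt_two_div_sqrt_sq_add_one.continuousOn
      (fun _ hr => (h.eq_zero_and_sq_eq hr).2) fun _ => by positivity⟩
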